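/- Let (G,H) and (E,K) be Friedrichs modules, let D ∈ B(G,E), and let a, c ∈ B(E,E*) satisfy, for some μ, ν > 0 and all u ∈ G, the coercivity estimates Re⟨Du, aDu⟩ ≥ μ‖u‖_G² − ν‖u‖_H² and Re⟨Du, cDu⟩ ≥ μ‖u‖_G² − ν‖u‖_H² (so that for Re z ≤ −ν the operators D*aD − z and D*cD − z are bijective maps G → G*). Fix z with Re z ≤ −ν, and let Δ_a, Δ_c be the operators induced in H by D*aD, D*cD. Assume D∘(Δ_c − z)⁻¹ ∈ B(H,K) is right decay preserving and D∘(D*cD − z)⁻¹∘D* ∈ B(K) is right decay preserving. If a − c restricts to a bounded operator on K which is right decay preserving, then D∘(Δ_a − z)⁻¹ ∈ B(H,K) is right decay preserving and D∘(D*aD − z)⁻¹∘D* ∈ B(K) is right decay preserving. The analogous statement holds with 'right' replaced by 'left' throughout. -/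

import Mathlib

open ContinuousLinearMap

noncomputable section

/-- The space of continuous antilinear forms on `G` (the "adjoint space" `G*`). -/
abbrev AntiDual (G : Type*) [NormedAddCommGroup G] [NormedSpace ℂ G] : Type _ :=
  G →SL[starRingEnd ℂ] ℂ

/-- Given a continuous embedding `e : G → H` of a normed space into a Hilbert space,
the canonical map `H → G*`, `v ↦ (u ↦ ⟪e u, v⟫)`. -/
def toAntiDual {G H : Type*} [NormedAddCommGroup G] [NormedSpace ℂ G]
    [NormedAddCommGroup H] [InnerProductSpace ℂ H] (e : G →L[ℂ] H) :
    H →L[ℂ] AntiDual G :=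
  LinearMap.mkContinuous
    { toFun := fun v => ((innerSL ℂ).flip v).comp e
      map_add' := fun v w => by ext u; simp
      map_smul' := fun c v => by ext u; simp }
    ‖e‖ (fun v => by
      have hv : ‖(innerSL ℂ).flip v‖ ≤ ‖v‖ :=
        opNorm_le_bound _ (norm_nonneg v)
          (fun u => by simpa [mul_comm] using norm_inner_le_norm (𝕜 := ℂ) u v)
      calc ‖((innerSL ℂ).flip v).comp e‖ ≤ ‖(innerSL ℂ).flip v‖ * ‖e‖ := opNorm_comp_le _ _
      _ ≤ ‖v‖ * ‖e‖ := by gcongr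
      _ = ‖e‖ * ‖v‖ := mul_comm _ _)

/-- Precomposition with `D : G →L E`, as a map `E* →L G*`; this is the adjoint `D*`. -/
def precompAntiDual {G E : Type*} [NormedAddCommGroup G] [NormedSpace ℂ G]
    [NormedAddCommGroup E] [NormedSpace ℂ E] (D : G →L[ℂ] E) :
    AntiDual E →L[ℂ] AntiDual G :=
  LinearMap.mkContinuous
    { toFun := fun w => w.comp D
      map_add' := fun w₁ w₂ => by ext u; simp
      map_smul' := fun c w => by ext u; simp }
    ‖D‖ (fun w => by
      calc ‖w.comp D‖ ≤ ‖w‖ * ‖D‖ := opNorm_comp_le _ _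
      _ = ‖D‖ * ‖w‖ := mul_comm _ _)

/-- Auxiliary: the antilinear form `u ↦ conj ⟨v, a u⟩`. -/
def adjointFormAux {E : Type*} [NormedAddCommGroup E] [NormedSpace ℂ E]
    (a : E →L[ℂ] AntiDual E) (v : E) : AntiDual E :=
  LinearMap.mkContinuous
    { toFun := fun u => starRingEnd ℂ (a u v)
      map_add' := fun u₁ u₂ => by simp
      map_smul' := fun c u => by simp }
    (‖a‖ * ‖v‖) (fun u => by
      simp only [LinearMap.coe_mk, AddHom.coe_mk]
      calc ‖starRingEnd ℂ (a u v)‖ = ‖a u v‖ := by simp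
      _ ≤ ‖a u‖ * ‖v‖ := (a u).le_opNorm v
      _ ≤ (‖a‖ * ‖u‖) * ‖v‖ := by gcongr; exact a.le_opNorm u
      _ = ‖a‖ * ‖v‖ * ‖u‖ := by ring)

theorem adjointFormAux_norm_le {E : Type*} [NormedAddCommGroup E] [NormedSpace ℂ E]
    (a : E →L[ℂ] AntiDual E) (v : E) : ‖adjointFormAux a v‖ ≤ ‖a‖ * ‖v‖ :=
  LinearMap.mkContinuous_norm_le _ (mul_nonneg (norm_nonneg a) (norm_nonneg v)) _

@[simp] theorem adjointFormAux_apply {E : Type*} [NormedAddCommGroup E] [NormedSpace ℂ E]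
    (a : E →L[ℂ] AntiDual E) (v u : E) :
    adjointFormAux a v u = starRingEnd ℂ (a u v) := rfl

/-- The adjoint form `a* ∈ B(E,E*)` of `a ∈ B(E,E*)`: `⟨u, a* v⟩ = conj ⟨v, a u⟩`. -/
def adjointForm {E : Type*} [NormedAddCommGroup E] [NormedSpace ℂ E]
    (a : E →L[ℂ] AntiDual E) : E →L[ℂ] AntiDual E :=
  LinearMap.mkContinuous
    { toFun := fun v => adjointFormAux a v
      map_add' := fun v w => by ext u; simp
      map_smul' := fun c v => by ext u; simp }
    ‖a‖ (fun v => adjointFormAux_norm_le a v)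

variable {H K : Type*}

/-- `M` is the multiplier algebra of a Banach module structure on `H`: a non-degenerate
norm-closed subalgebra of `B(H)` possessing a bounded approximate unit. -/
structure IsBanachModule (H : Type*) [NormedAddCommGroup H] [NormedSpace ℂ H]
    (M : Set (H →L[ℂ] H)) : Prop where
  zero_mem : (0 : H →L[ℂ] H) ∈ M
  add_mem : ∀ {A B : H →L[ℂ] H}, A ∈ M → B ∈ M → A + B ∈ M
  smul_mem : ∀ (c : ℂ) {A : H →L[ℂ] H}, A ∈ M → c • A ∈ M
  mul_mem : ∀ {A B : H →L[ℂ] H}, A ∈ M → B ∈ M → A.comp B ∈ M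
  isClosed : IsClosed M
  nondegenerate : Dense (↑(Submodule.span ℂ {u : H | ∃ A ∈ M, ∃ v : H, u = A v}) : Set H)
  approx_unit : ∃ C : ℝ, ∀ ε > (0 : ℝ), ∀ F : Finset (H →L[ℂ] H), ↑F ⊆ M →
    ∃ J ∈ M, ‖J‖ ≤ C ∧ ∀ A ∈ F, ‖J.comp A - A‖ ≤ ε ∧ ‖A.comp J - A‖ ≤ ε

/-- A Hilbert module: a Banach module on a Hilbert space whose multiplier algebra is a
C*-algebra of operators (i.e. is moreover closed under adjoints). -/
structure IsHilbertModule (H : Type*) [NormedAddCommGroup H] [InnerProductSpace ℂ H]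
    [CompleteSpace H] (M : Set (H →L[ℂ] H)) extends IsBanachModule H M : Prop where
  star_mem : ∀ {A : H →L[ℂ] H}, A ∈ M → ContinuousLinearMap.adjoint A ∈ M

/-- `B₀ˡ(H,K)`: the closed linear span of the operators `A ∘ T` with `A` in the multiplier
algebra of `K` and `T ∈ B(H,K)` (operators left vanishing at infinity). -/
def B0l [NormedAddCommGroup H] [NormedSpace ℂ H] [NormedAddCommGroup K] [NormedSpace ℂ K]
    (MK : Set (K →L[ℂ] K)) : Set (H →L[ℂ] K) :=
  closure (↑(Submodule.span ℂ
    {S : H →L[ℂ] K | ∃ A ∈ MK, ∃ T : H →L[ℂ] K, S = A.comp T}) : Set (H →L[ℂ] K))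

/-- `B₀ʳ(H,K)`: the closed linear span of the operators `T ∘ A` with `A` in the multiplier
algebra of `H` and `T ∈ B(H,K)` (operators right vanishing at infinity). -/
def B0r [NormedAddCommGroup H] [NormedSpace ℂ H] [NormedAddCommGroup K] [NormedSpace ℂ K]
    (MH : Set (H →L[ℂ] H)) : Set (H →L[ℂ] K) :=
  closure (↑(Submodule.span ℂ
    {S : H →L[ℂ] K | ∃ A ∈ MH, ∃ T : H →L[ℂ] K, S = T.comp A}) : Set (H →L[ℂ] K))

/-- `S ∈ B(H,K)` is left decay preserving. -/
def LeftDecayPreserving [NormedAddCommGroup H] [NormedSpace ℂ H] [NormedAddCommGroup K]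
    [NormedSpace ℂ K] (MH : Set (H →L[ℂ] H)) (MK : Set (K →L[ℂ] K))
    (S : H →L[ℂ] K) : Prop :=
  ∀ A ∈ MH, S.comp A ∈ B0l MK

/-- `S ∈ B(H,K)` is right decay preserving. -/
def RightDecayPreserving [NormedAddCommGroup H] [NormedSpace ℂ H] [NormedAddCommGroup K]
    [NormedSpace ℂ K] (MH : Set (H →L[ℂ] H)) (MK : Set (K →L[ℂ] K))
    (S : H →L[ℂ] K) : Prop :=
  ∀ A ∈ MK, A.comp S ∈ B0r MH

/-!
Interpolate between the forms `D*cD - z` and `D*aD - z` by `L t = (1 - t) L₀ + t L₁`. Each `L t`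
with `0 ≤ t ≤ 1` satisfies the same coercivity estimate, hence is invertible (complex
Lax–Milgram), and `T t = D (L t)⁻¹ D*` is bounded uniformly in `t`. The second resolvent identity
gives `T t (1 + (t - s) m T s) = T s` and `W t = W s - (t - s) T t m W s`, so when `t - s` is small
compared with that bound, `T t` is `T s` times a convergent Neumann series. Right (resp. left)
decay preserving operators on `K` form a norm-closed subalgebra, and those from `H` to `K` a
submodule stable under it, so both properties pass from `t = 0` to `t = 1` in finitely many steps.
-/

section DecayPreserving

variable {H H' K K' : Type*} [NormedAddCommGroup H] [NormedSpace ℂ H]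
  [NormedAddCommGroup H'] [NormedSpace ℂ H'] [NormedAddCommGroup K] [NormedSpace ℂ K]
  [NormedAddCommGroup K'] [NormedSpace ℂ K']

theorem map_mem_closure_span {X Y : Type*} [NormedAddCommGroup X] [NormedSpace ℂ X]
    [NormedAddCommGroup Y] [NormedSpace ℂ Y] (Φ : X →L[ℂ] Y) {s : Set X} {t : Set Y}
    (h : ∀ x ∈ s, Φ x ∈ closure (Submodule.span ℂ t : Set Y)) {x : X}
    (hx : x ∈ closure (Submodule.span ℂ s : Set X)) :
    Φ x ∈ closure (Submodule.span ℂ t : Set Y) :=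
  closure_minimal
    (Submodule.span_le (p := (Submodule.span ℂ t).topologicalClosure.comap (Φ : X →ₗ[ℂ] Y)).2 h)
    ((Submodule.span ℂ t).isClosed_topologicalClosure.preimage Φ.continuous) hx

-- Its carrier is `B0r MH` definitionally; it supplies the linear structure of `B0r`.
def B0rSubmodule (MH : Set (H →L[ℂ] H)) : Submodule ℂ (H →L[ℂ] K) :=
  (Submodule.span ℂ {S : H →L[ℂ] K | ∃ A ∈ MH, ∃ T : H →L[ℂ] K, S = T.comp A}).topologicalClosure

theorem isClosed_B0r (MH : Set (H →L[ℂ] H)) : IsClosed (B0r MH : Set (H →L[ℂ] K)) :=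
  isClosed_closure

theorem mem_B0r_of_mem {MH : Set (H →L[ℂ] H)} {A : H →L[ℂ] H} (hA : A ∈ MH) : A ∈ B0r MH :=
  subset_closure (Submodule.subset_span ⟨A, hA, .id ℂ H, (id_comp A).symm⟩)

theorem comp_mem_B0r {MH : Set (H →L[ℂ] H)} {X : H →L[ℂ] K} (hX : X ∈ B0r MH)
    (T : K →L[ℂ] K') : T ∘L X ∈ B0r MH :=
  map_mem_closure_span (compL ℂ H K K' T) (by
    rintro _ ⟨A, hA, T', rfl⟩
    exact subset_closure (Submodule.subset_span ⟨A, hA, T ∘L T', by simp [comp_assoc]⟩)) hX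

theorem RightDecayPreserving.comp_mem_B0r {MH : Set (H →L[ℂ] H)} {MK : Set (K →L[ℂ] K)}
    {Y : H →L[ℂ] K} (hY : RightDecayPreserving MH MK Y) {X : K →L[ℂ] K'} (hX : X ∈ B0r MK) :
    X ∘L Y ∈ B0r MH :=
  map_mem_closure_span ((compL ℂ H K K').flip Y) (by
    rintro _ ⟨A, hA, T, rfl⟩
    simp only [flip_apply, compL_apply, comp_assoc]
    exact _root_.comp_mem_B0r (hY A hA) T) hX

theorem RightDecayPreserving.comp {MH : Set (H →L[ℂ] H)} {MK : Set (K →L[ℂ] K)}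
    {MK' : Set (K' →L[ℂ] K')} {Y : H →L[ℂ] K} {X : K →L[ℂ] K'}
    (hY : RightDecayPreserving MH MK Y) (hX : RightDecayPreserving MK MK' X) :
    RightDecayPreserving MH MK' (X ∘L Y) := fun A hA => by
  simpa [comp_assoc] using hY.comp_mem_B0r (hX A hA)

def rightDecayPreservingSubmodule (MH : Set (H →L[ℂ] H)) (MK : Set (K →L[ℂ] K)) :
    Submodule ℂ (H →L[ℂ] K) where
  carrier := {S | RightDecayPreserving MH MK S}
  zero_mem' A _ := by
    rw [comp_zero]
    exact (B0rSubmodule MH).zero_mem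
  add_mem' hS hT A hA := by
    rw [comp_add]
    exact (B0rSubmodule MH).add_mem (hS A hA) (hT A hA)
  smul_mem' c _ hS A hA := by
    rw [comp_smul]
    exact (B0rSubmodule MH).smul_mem c (hS A hA)

theorem isClosed_rightDecayPreservingSubmodule (MH : Set (H →L[ℂ] H)) (MK : Set (K →L[ℂ] K)) :
    IsClosed (rightDecayPreservingSubmodule MH MK : Set (H →L[ℂ] K)) := by
  simp only [rightDecayPreservingSubmodule, RightDecayPreserving, Submodule.coe_set_mk,
    AddSubmonoid.coe_set_mk, AddSubsemigroup.coe_set_mk, Set.ofPred_forall]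
  exact isClosed_iInter fun A => isClosed_iInter fun _ =>
    (isClosed_B0r MH).preimage (compL ℂ H K K A).continuous

def rightDecayPreservingSubalgebra (MK : Set (K →L[ℂ] K)) : Subalgebra ℂ (K →L[ℂ] K) :=
  (rightDecayPreservingSubmodule MK MK).toSubalgebra (fun A hA => by
    rw [one_def, comp_id]
    exact mem_B0r_of_mem hA)
    fun _ _ hS hT => hT.comp hS

def B0lSubmodule (MK : Set (K →L[ℂ] K)) : Submodule ℂ (H →L[ℂ] K) :=
  (Submodule.span ℂ {S : H →L[ℂ] K | ∃ A ∈ MK, ∃ T : H →L[ℂ] K, S = A.comp T}).topologicalClosure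

theorem isClosed_B0l (MK : Set (K →L[ℂ] K)) : IsClosed (B0l MK : Set (H →L[ℂ] K)) :=
  isClosed_closure

theorem mem_B0l_of_mem {MK : Set (K →L[ℂ] K)} {A : K →L[ℂ] K} (hA : A ∈ MK) : A ∈ B0l MK :=
  subset_closure (Submodule.subset_span ⟨A, hA, .id ℂ K, (comp_id A).symm⟩)

theorem comp_mem_B0l {MK : Set (K →L[ℂ] K)} {X : H →L[ℂ] K} (hX : X ∈ B0l MK)
    (T : H' →L[ℂ] H) : X ∘L T ∈ B0l MK :=
  map_mem_closure_span ((compL ℂ H' H K).flip T) (by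
    rintro _ ⟨A, hA, T', rfl⟩
    exact subset_closure (Submodule.subset_span ⟨A, hA, T' ∘L T, by simp [comp_assoc]⟩)) hX

theorem LeftDecayPreserving.comp_mem_B0l {MK : Set (K →L[ℂ] K)} {MK' : Set (K' →L[ℂ] K')}
    {Y : K →L[ℂ] K'} (hY : LeftDecayPreserving MK MK' Y) {X : H →L[ℂ] K} (hX : X ∈ B0l MK) :
    Y ∘L X ∈ B0l MK' :=
  map_mem_closure_span (compL ℂ H K K' Y) (by
    rintro _ ⟨A, hA, T, rfl⟩
    simp only [compL_apply, ← comp_assoc]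
    exact _root_.comp_mem_B0l (hY A hA) T) hX

theorem LeftDecayPreserving.comp {MH : Set (H →L[ℂ] H)} {MK : Set (K →L[ℂ] K)}
    {MK' : Set (K' →L[ℂ] K')} {X : H →L[ℂ] K} {Y : K →L[ℂ] K'}
    (hX : LeftDecayPreserving MH MK X) (hY : LeftDecayPreserving MK MK' Y) :
    LeftDecayPreserving MH MK' (Y ∘L X) := fun A hA => by
  simpa [comp_assoc] using hY.comp_mem_B0l (hX A hA)

def leftDecayPreservingSubmodule (MH : Set (H →L[ℂ] H)) (MK : Set (K →L[ℂ] K)) :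
    Submodule ℂ (H →L[ℂ] K) where
  carrier := {S | LeftDecayPreserving MH MK S}
  zero_mem' A _ := by
    rw [zero_comp]
    exact (B0lSubmodule MK).zero_mem
  add_mem' hS hT A hA := by
    rw [add_comp]
    exact (B0lSubmodule MK).add_mem (hS A hA) (hT A hA)
  smul_mem' c _ hS A hA := by
    rw [smul_comp]
    exact (B0lSubmodule MK).smul_mem c (hS A hA)

theorem isClosed_leftDecayPreservingSubmodule (MH : Set (H →L[ℂ] H)) (MK : Set (K →L[ℂ] K)) :
    IsClosed (leftDecayPreservingSubmodule MH MK : Set (H →L[ℂ] K)) := by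
  simp only [leftDecayPreservingSubmodule, LeftDecayPreserving, Submodule.coe_set_mk,
    AddSubmonoid.coe_set_mk, AddSubsemigroup.coe_set_mk, Set.ofPred_forall]
  exact isClosed_iInter fun A => isClosed_iInter fun _ =>
    (isClosed_B0l MK).preimage ((compL ℂ H H K).flip A).continuous

def leftDecayPreservingSubalgebra (MK : Set (K →L[ℂ] K)) : Subalgebra ℂ (K →L[ℂ] K) :=
  (leftDecayPreservingSubmodule MK MK).toSubalgebra (fun A hA => by
    rw [one_def, id_comp]
    exact mem_B0l_of_mem hA)
    fun _ _ hS hT => hT.comp hS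

end DecayPreserving

@[simp] theorem toAntiDual_apply {G H : Type*} [NormedAddCommGroup G] [NormedSpace ℂ G]
    [NormedAddCommGroup H] [InnerProductSpace ℂ H] (e : G →L[ℂ] H) (v : H) (u : G) :
    toAntiDual e v u = inner ℂ (e u) v := rfl

@[simp] theorem precompAntiDual_apply {G E : Type*} [NormedAddCommGroup G] [NormedSpace ℂ G]
    [NormedAddCommGroup E] [NormedSpace ℂ E] (D : G →L[ℂ] E) (w : AntiDual E) (u : G) :
    precompAntiDual D w u = w (D u) := rfl

theorem toAntiDual_id_surjective {G : Type*} [NormedAddCommGroup G] [InnerProductSpace ℂ G]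
    [CompleteSpace G] : Function.Surjective (toAntiDual (.id ℂ G)) := fun f => by
  refine ⟨(InnerProductSpace.toDual ℂ G).symm (((starL ℂ : ℂ ≃L⋆[ℂ] ℂ) : ℂ →L⋆[ℂ] ℂ).comp f), ?_⟩
  ext u
  rw [toAntiDual_apply, id_apply, ← inner_conj_symm, InnerProductSpace.toDual_symm_apply]
  simp

def IsCoerciveForm {G : Type*} [NormedAddCommGroup G] [NormedSpace ℂ G]
    (L : G →L[ℂ] AntiDual G) (μ : ℝ) : Prop :=
  ∀ u, μ * ‖u‖ ^ 2 ≤ (L u u).re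

namespace IsCoerciveForm

section NormedSpace

variable {G : Type*} [NormedAddCommGroup G] [NormedSpace ℂ G] {L L₀ L₁ : G →L[ℂ] AntiDual G}
  {μ : ℝ}

theorem mul_norm_le_norm (h : IsCoerciveForm L μ) (u : G) : μ * ‖u‖ ≤ ‖L u‖ := by
  rcases (norm_nonneg u).eq_or_lt with hu | hu
  · simp [← hu]
  · refine le_of_mul_le_mul_right ?_ hu
    calc μ * ‖u‖ * ‖u‖ = μ * ‖u‖ ^ 2 := by ring
      _ ≤ (L u u).re := h u
      _ ≤ ‖L u u‖ := Complex.re_le_norm _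
      _ ≤ ‖L u‖ * ‖u‖ := (L u).le_opNorm u

theorem antilipschitz (h : IsCoerciveForm L μ) (hμ : 0 < μ) :
    AntilipschitzWith ⟨μ⁻¹, by positivity⟩ L :=
  L.antilipschitz_of_bound fun u => by
    change ‖u‖ ≤ μ⁻¹ * ‖L u‖
    rw [le_inv_mul_iff₀ hμ]
    exact h.mul_norm_le_norm u

theorem eq_zero_of_apply_self_eq_zero (h : IsCoerciveForm L μ) (hμ : 0 < μ) {u : G}
    (hu : L u u = 0) : u = 0 := by
  have := h u
  rw [hu, Complex.zero_re] at this
  exact norm_eq_zero.1 <| (pow_eq_zero_iff two_ne_zero).1 <|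
    le_antisymm (nonpos_of_mul_nonpos_right this hμ) (sq_nonneg _)

theorem add_smul_sub (h₀ : IsCoerciveForm L₀ μ) (h₁ : IsCoerciveForm L₁ μ) {t : ℝ}
    (ht : t ∈ Set.Icc (0 : ℝ) 1) : IsCoerciveForm (L₀ + (t : ℂ) • (L₁ - L₀)) μ := fun u => by
  have hre : ((L₀ + (t : ℂ) • (L₁ - L₀)) u u).re = (1 - t) * (L₀ u u).re + t * (L₁ u u).re := by
    simp only [add_apply, smul_apply, sub_apply, smul_eq_mul, Complex.add_re, Complex.mul_re,
      Complex.ofReal_re, Complex.ofReal_im, Complex.sub_re, zero_mul, sub_zero]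
    ring
  rw [hre]
  nlinarith [h₀ u, h₁ u, ht.1, ht.2]

end NormedSpace

variable {G : Type*} [NormedAddCommGroup G] [InnerProductSpace ℂ G] [CompleteSpace G]
  {L : G →L[ℂ] AntiDual G} {μ : ℝ}

theorem range_eq_top (h : IsCoerciveForm L μ) (hμ : 0 < μ) : L.range = ⊤ := by
  set J := toAntiDual (.id ℂ G)
  set V := L.range.comap (J : G →ₗ[ℂ] AntiDual G)
  have hV : IsClosed (V : Set G) :=
    ((h.antilipschitz hμ).isClosed_range L.uniformContinuous).preimage J.continuous
  have hVperp : Vᗮ = ⊥ := by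
    refine (Submodule.eq_bot_iff _).2 fun w hw => h.eq_zero_of_apply_self_eq_zero hμ ?_
    obtain ⟨v, hv⟩ := toAntiDual_id_surjective (L w)
    have hvV : v ∈ V := ⟨w, hv.symm⟩
    rw [← hv, toAntiDual_apply, id_apply, ← inner_conj_symm,
      Submodule.inner_right_of_mem_orthogonal hvV hw, map_zero]
  have hVtop : V = ⊤ := by
    rw [← hV.submodule_topologicalClosure_eq, Submodule.topologicalClosure_eq_top_iff, hVperp]
  refine eq_top_iff.2 fun f _ => ?_
  obtain ⟨v, rfl⟩ := toAntiDual_id_surjective f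
  exact (hVtop ▸ Submodule.mem_top : v ∈ V)

theorem isInvertible (h : IsCoerciveForm L μ) (hμ : 0 < μ) : L.IsInvertible :=
  ⟨.ofBijective L (LinearMap.ker_eq_bot_of_injective (h.antilipschitz hμ).injective)
    (h.range_eq_top hμ), rfl⟩

theorem norm_inverse_le (h : IsCoerciveForm L μ) (hμ : 0 < μ) : ‖L.inverse‖ ≤ μ⁻¹ :=
  opNorm_le_bound _ (by positivity) fun f => by
    rw [le_inv_mul_iff₀ hμ]
    simpa [(h.isInvertible hμ).self_apply_inverse] using h.mul_norm_le_norm (L.inverse f)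

end IsCoerciveForm

theorem isCoerciveForm_sub_smul_of_garding {G H : Type*} [NormedAddCommGroup G]
    [InnerProductSpace ℂ G] [NormedAddCommGroup H] [InnerProductSpace ℂ H]
    {B : G →L[ℂ] AntiDual G} {e : G →L[ℂ] H} {μ ν : ℝ}
    (hB : ∀ u, μ * ‖u‖ ^ 2 - ν * ‖e u‖ ^ 2 ≤ (B u u).re) {z : ℂ} (hz : z.re ≤ -ν) :
    IsCoerciveForm (B - z • (toAntiDual e).comp e) μ := fun u => by
  have hre : ((B - z • (toAntiDual e).comp e) u u).re = (B u u).re - z.re * ‖e u‖ ^ 2 := by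
    simp [inner_self_eq_norm_sq_to_K, ← Complex.ofReal_pow]
  rw [hre]
  nlinarith [hB u, sq_nonneg ‖e u‖]

section Perturbation

variable {G X H K : Type*} [NormedAddCommGroup G] [NormedSpace ℂ G]
  [NormedAddCommGroup X] [NormedSpace ℂ X] [NormedAddCommGroup H] [NormedSpace ℂ H]
  [NormedAddCommGroup K] [NormedSpace ℂ K]

theorem ContinuousLinearMap.IsInvertible.inverse_sub_inverse {L L' : G →L[ℂ] X}
    (hL : L.IsInvertible) (hL' : L'.IsInvertible) :
    L.inverse - L'.inverse = L'.inverse ∘L (L' - L) ∘L L.inverse := by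
  ext x
  simp [hL.self_apply_inverse, hL'.inverse_apply_self]

theorem ContinuousLinearMap.IsInvertible.comp_inverse_comp_of_sub_eq {Y : Type*}
    [NormedAddCommGroup Y] [NormedSpace ℂ Y] {L L' : G →L[ℂ] X} (hL : L.IsInvertible)
    (hL' : L'.IsInvertible) {g : K →L[ℂ] X} {m : K →L[ℂ] K} {P : G →L[ℂ] K}
    (hLL' : L' - L = g ∘L m ∘L P) (Q : Y →L[ℂ] X) :
    P ∘L L'.inverse ∘L Q =
      P ∘L L.inverse ∘L Q - (P ∘L L'.inverse ∘L g) ∘L m ∘L (P ∘L L.inverse ∘L Q) := by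
  have := congr(P ∘L $(hL.inverse_sub_inverse hL') ∘L Q)
  rw [hLL'] at this
  simp only [comp_sub, sub_comp, comp_assoc] at this ⊢
  rw [← this, sub_sub_cancel]

variable [CompleteSpace K] {S : Subalgebra ℂ (K →L[ℂ] K)} {𝒲 : Submodule ℂ (H →L[ℂ] K)}
  {f : H →L[ℂ] X} {g : K →L[ℂ] X} {P : G →L[ℂ] K} {m : K →L[ℂ] K}

theorem comp_inverse_comp_mem_of_perturbation (hS : IsClosed (S : Set (K →L[ℂ] K)))
    (h𝒲 : ∀ T ∈ S, ∀ W ∈ 𝒲, T ∘L W ∈ 𝒲) {L L' : G →L[ℂ] X} (hL : L.IsInvertible)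
    (hL' : L'.IsInvertible) (hm : m ∈ S) (hLL' : L' - L = g ∘L m ∘L P)
    (hT : P ∘L L.inverse ∘L g ∈ S) (hW : P ∘L L.inverse ∘L f ∈ 𝒲)
    (hsmall : ‖m‖ * ‖P ∘L L.inverse ∘L g‖ < 1) :
    P ∘L L'.inverse ∘L g ∈ S ∧ P ∘L L'.inverse ∘L f ∈ 𝒲 := by
  set T := P ∘L L.inverse ∘L g
  set T' := P ∘L L'.inverse ∘L g
  set y := -(m * T)
  have hy : ‖y‖ < 1 := (norm_neg _).trans_lt ((norm_mul_le _ _).trans_lt hsmall)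
  have hT'T : T' * (1 - y) = T := by
    rw [sub_neg_eq_add, mul_add, mul_one]
    exact eq_sub_iff_add_eq.1 (hL.comp_inverse_comp_of_sub_eq hL' hLL' g)
  have hT'S : T' ∈ S := by
    have hT' : T' = T * ∑' n, y ^ n := by
      rw [← hT'T, mul_assoc, mul_neg_geom_series y hy, mul_one]
    rw [hT']
    exact S.mul_mem hT (tsum_mem hS fun n => pow_mem (S.neg_mem (S.mul_mem hm hT)) n)
  refine ⟨hT'S, ?_⟩
  rw [hL.comp_inverse_comp_of_sub_eq hL' hLL' f]
  exact 𝒲.sub_mem hW (h𝒲 _ (S.mul_mem hT'S hm) _ hW)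

end Perturbation

theorem holds_at_one_of_small_steps {p : ℝ → Prop} {δ : ℝ} (hδ : 0 < δ) (h₀ : p 0)
    (hstep : ∀ s t, 0 ≤ s → s ≤ t → t ≤ 1 → t - s ≤ δ → p s → p t) : p 1 := by
  obtain ⟨n, hn⟩ := exists_nat_gt δ⁻¹
  have hn₀ : (0 : ℝ) < n := (inv_pos.2 hδ).trans hn
  have hk : ∀ k ≤ n, p (k / n) := by
    intro k
    induction k with
    | zero => simpa using h₀
    | succ k ih =>
      intro hkn
      refine hstep _ _ (by positivity) (by gcongr; simp) ?_ ?_ (ih (by omega))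
      · rw [div_le_one hn₀]
        exact_mod_cast hkn
      · rw [← sub_div, Nat.cast_succ, add_sub_cancel_left, one_div]
        exact (inv_lt_of_inv_lt₀ hδ hn).le
  simpa [hn₀.ne'] using hk n le_rfl

theorem comp_inverse_comp_mem_of_coercive {G H K : Type*} [NormedAddCommGroup G]
    [InnerProductSpace ℂ G] [CompleteSpace G] [NormedAddCommGroup H] [NormedSpace ℂ H]
    [NormedAddCommGroup K] [NormedSpace ℂ K] [CompleteSpace K]
    {S : Subalgebra ℂ (K →L[ℂ] K)} (hS : IsClosed (S : Set (K →L[ℂ] K)))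
    {𝒲 : Submodule ℂ (H →L[ℂ] K)} (h𝒲 : ∀ T ∈ S, ∀ W ∈ 𝒲, T ∘L W ∈ 𝒲)
    {L₀ L₁ : G →L[ℂ] AntiDual G} {μ : ℝ} (hμ : 0 < μ) (h₀ : IsCoerciveForm L₀ μ)
    (h₁ : IsCoerciveForm L₁ μ) {f : H →L[ℂ] AntiDual G} {g : K →L[ℂ] AntiDual G}
    {P : G →L[ℂ] K} {m : K →L[ℂ] K} (hm : m ∈ S) (hL : L₁ - L₀ = g ∘L m ∘L P)
    (hT : P ∘L L₀.inverse ∘L g ∈ S) (hW : P ∘L L₀.inverse ∘L f ∈ 𝒲) :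
    P ∘L L₁.inverse ∘L g ∈ S ∧ P ∘L L₁.inverse ∘L f ∈ 𝒲 := by
  set L : ℝ → G →L[ℂ] AntiDual G := fun t => L₀ + (t : ℂ) • (L₁ - L₀)
  have hLt : ∀ t ∈ Set.Icc (0 : ℝ) 1, IsCoerciveForm (L t) μ := fun t ht => h₀.add_smul_sub h₁ ht
  obtain ⟨C, hC₀, hC⟩ : ∃ C, 0 ≤ C ∧ ∀ t ∈ Set.Icc (0 : ℝ) 1, ‖P ∘L (L t).inverse ∘L g‖ ≤ C :=
    ⟨‖P‖ * (μ⁻¹ * ‖g‖), by positivity, fun t ht => (opNorm_comp_le _ _).trans <| by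
      gcongr
      exact (opNorm_comp_le _ _).trans (by gcongr; exact (hLt t ht).norm_inverse_le hμ)⟩
  have hL0 : L 0 = L₀ := by ext; simp [L]
  have hL1 : L 1 = L₁ := by ext; simp [L]
  set p : ℝ → Prop := fun t => P ∘L (L t).inverse ∘L g ∈ S ∧ P ∘L (L t).inverse ∘L f ∈ 𝒲
  suffices p 1 by simpa [p, hL1] using this
  refine holds_at_one_of_small_steps (p := p) (δ := (C * ‖m‖ + 1)⁻¹) (by positivity)
    (by simpa [p, hL0] using And.intro hT hW) fun s t hs hst ht hδ ⟨hTs, hWs⟩ => ?_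
  have hsI : s ∈ Set.Icc (0 : ℝ) 1 := ⟨hs, hst.trans ht⟩
  have htI : t ∈ Set.Icc (0 : ℝ) 1 := ⟨hs.trans hst, ht⟩
  refine comp_inverse_comp_mem_of_perturbation hS h𝒲 ((hLt s hsI).isInvertible hμ)
    ((hLt t htI).isInvertible hμ) (S.smul_mem hm ((t - s : ℝ) : ℂ)) ?_ hTs hWs ?_
  · have : L t - L s = ((t - s : ℝ) : ℂ) • (L₁ - L₀) := by ext; simp [L]; ring
    rw [this, hL]
    ext
    simp
  · calc ‖((t - s : ℝ) : ℂ) • m‖ * ‖P ∘L (L s).inverse ∘L g‖ ≤ (C * ‖m‖ + 1)⁻¹ * ‖m‖ * C := by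
          rw [norm_smul, Complex.norm_real, Real.norm_of_nonneg (sub_nonneg.2 hst)]
          gcongr
          exact hC s hsI
      _ < 1 := by
          rw [mul_assoc, inv_mul_lt_one₀ (by positivity)]
          linarith [mul_comm C ‖m‖]

theorem ContinuousLinearMap.IsInvertible.eq_comp_inverse_comp {G X Y K : Type*}
    [NormedAddCommGroup G] [NormedSpace ℂ G] [NormedAddCommGroup X] [NormedSpace ℂ X]
    [NormedAddCommGroup Y] [NormedSpace ℂ Y] [NormedAddCommGroup K] [NormedSpace ℂ K]
    {L : G →L[ℂ] X} (hL : L.IsInvertible) {f : Y →L[ℂ] X} {P : G →L[ℂ] K} {W : Y →L[ℂ] K}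
    (hW : ∀ v, ∃ u, L u = f v ∧ W v = P u) : W = P ∘L L.inverse ∘L f := by
  ext v
  obtain ⟨u, hu, hWv⟩ := hW v
  simp [hWv, ← hu, hL.inverse_apply_self]

theorem stmt6_general {G H E K : Type*}
    [NormedAddCommGroup G] [InnerProductSpace ℂ G] [CompleteSpace G]
    [NormedAddCommGroup H] [InnerProductSpace ℂ H] [CompleteSpace H]
    [NormedAddCommGroup E] [InnerProductSpace ℂ E] [CompleteSpace E]
    [NormedAddCommGroup K] [InnerProductSpace ℂ K] [CompleteSpace K]
    -- `(G, H)` and `(E, K)` are Friedrichs modules: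
    (MH : Set (H →L[ℂ] H))
    (e : G →L[ℂ] H)
    (MK : Set (K →L[ℂ] K))
    (eE : E →L[ℂ] K)
    (D : G →L[ℂ] E) (a c : E →L[ℂ] AntiDual E)
    -- coercivity of `D*aD` and `D*cD`:
    (μ ν : ℝ) (hμ : 0 < μ)
    (hcoa : ∀ u : G, μ * ‖u‖ ^ 2 - ν * ‖e u‖ ^ 2 ≤ (a (D u) (D u)).re)
    (hcoc : ∀ u : G, μ * ‖u‖ ^ 2 - ν * ‖e u‖ ^ 2 ≤ (c (D u) (D u)).re)
    (z : ℂ) (hz : z.re ≤ -ν)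
    -- `Wc = D (Δ_c − z)⁻¹ ∈ B(H,K)` and `Tc = D (D*cD − z)⁻¹ D* ∈ B(K)`:
    (Wc : H →L[ℂ] K)
    (hWc : ∀ v : H, ∃ u : G,
      ((precompAntiDual D).comp (c.comp D)) u - z • ((toAntiDual e).comp e) u
          = toAntiDual e v ∧ Wc v = eE (D u))
    (Tc : K →L[ℂ] K)
    (hTc : ∀ w : K, ∃ u : G,
      ((precompAntiDual D).comp (c.comp D)) u - z • ((toAntiDual e).comp e) u
          = precompAntiDual D (toAntiDual eE w) ∧ Tc w = eE (D u))
    -- `a − c` restricts to a bounded operator `m` on `K`: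
    (m : K →L[ℂ] K) (hm : ∀ u : E, (a - c) u = toAntiDual eE (m (eE u))) :
    -- right decay preserving version:
    ((RightDecayPreserving MH MK Wc → RightDecayPreserving MK MK Tc →
      RightDecayPreserving MK MK m →
      ∃ (Wa : H →L[ℂ] K) (Ta : K →L[ℂ] K),
        (∀ v : H, ∃ u : G,
          ((precompAntiDual D).comp (a.comp D)) u - z • ((toAntiDual e).comp e) u
              = toAntiDual e v ∧ Wa v = eE (D u)) ∧
        (∀ w : K, ∃ u : G,
          ((precompAntiDual D).comp (a.comp D)) u - z • ((toAntiDual e).comp e) u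
              = precompAntiDual D (toAntiDual eE w) ∧ Ta w = eE (D u)) ∧
        RightDecayPreserving MH MK Wa ∧ RightDecayPreserving MK MK Ta)) ∧
    -- left decay preserving version:
    ((LeftDecayPreserving MH MK Wc → LeftDecayPreserving MK MK Tc →
      LeftDecayPreserving MK MK m →
      ∃ (Wa : H →L[ℂ] K) (Ta : K →L[ℂ] K),
        (∀ v : H, ∃ u : G,
          ((precompAntiDual D).comp (a.comp D)) u - z • ((toAntiDual e).comp e) u
              = toAntiDual e v ∧ Wa v = eE (D u)) ∧
        (∀ w : K, ∃ u : G,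
          ((precompAntiDual D).comp (a.comp D)) u - z • ((toAntiDual e).comp e) u
              = precompAntiDual D (toAntiDual eE w) ∧ Ta w = eE (D u)) ∧
        LeftDecayPreserving MH MK Wa ∧ LeftDecayPreserving MK MK Ta)) := by
  set P := eE ∘L D
  set g := precompAntiDual D ∘L toAntiDual eE
  set Lc := precompAntiDual D ∘L c ∘L D - z • toAntiDual e ∘L e
  set La := precompAntiDual D ∘L a ∘L D - z • toAntiDual e ∘L e
  have hLc : IsCoerciveForm Lc μ := isCoerciveForm_sub_smul_of_garding hcoc hz
  have hLa : IsCoerciveForm La μ := isCoerciveForm_sub_smul_of_garding hcoa hz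
  have hdiff : La - Lc = g ∘L m ∘L P := by
    ext u w
    simpa [Lc, La, g, P] using congr($(hm (D u)) (D w))
  have hWc' : Wc = P ∘L Lc.inverse ∘L toAntiDual e :=
    (hLc.isInvertible hμ).eq_comp_inverse_comp hWc
  have hTc' : Tc = P ∘L Lc.inverse ∘L g := (hLc.isInvertible hμ).eq_comp_inverse_comp hTc
  have key : ∀ (S : Subalgebra ℂ (K →L[ℂ] K)) (𝒲 : Submodule ℂ (H →L[ℂ] K)),
      IsClosed (S : Set (K →L[ℂ] K)) → (∀ T ∈ S, ∀ W ∈ 𝒲, T ∘L W ∈ 𝒲) → Wc ∈ 𝒲 → Tc ∈ S →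
      m ∈ S → ∃ (Wa : H →L[ℂ] K) (Ta : K →L[ℂ] K),
        (∀ v, ∃ u, La u = toAntiDual e v ∧ Wa v = P u) ∧
        (∀ w, ∃ u, La u = g w ∧ Ta w = P u) ∧ Wa ∈ 𝒲 ∧ Ta ∈ S := by
    intro S 𝒲 hS h𝒲 hW hT hmS
    rw [hWc'] at hW
    rw [hTc'] at hT
    obtain ⟨hTa, hWa⟩ := comp_inverse_comp_mem_of_coercive hS h𝒲 hμ hLc hLa hmS hdiff hT hW
    have hLa' := hLa.isInvertible hμ
    exact ⟨_, _, fun v => ⟨_, hLa'.self_apply_inverse _, rfl⟩,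
      fun w => ⟨_, hLa'.self_apply_inverse _, rfl⟩, hWa, hTa⟩
  exact ⟨key (rightDecayPreservingSubalgebra MK) (rightDecayPreservingSubmodule MH MK)
      (isClosed_rightDecayPreservingSubmodule MK MK) fun _ hT _ hW => hW.comp hT,
    key (leftDecayPreservingSubalgebra MK) (leftDecayPreservingSubmodule MH MK)
      (isClosed_leftDecayPreservingSubmodule MK MK) fun _ hT _ hW => hW.comp hT⟩

/-- Perturbative criterion for the decay preserving property of
`D (Δ_a − z)⁻¹` and `D (D*aD − z)⁻¹ D*`. -/
theorem stmt6 {G H E K : Type*}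
    [NormedAddCommGroup G] [InnerProductSpace ℂ G] [CompleteSpace G]
    [NormedAddCommGroup H] [InnerProductSpace ℂ H] [CompleteSpace H]
    [NormedAddCommGroup E] [InnerProductSpace ℂ E] [CompleteSpace E]
    [NormedAddCommGroup K] [InnerProductSpace ℂ K] [CompleteSpace K]
    -- `(G, H)` and `(E, K)` are Friedrichs modules:
    (MH : Set (H →L[ℂ] H)) (hMH : IsHilbertModule H MH)
    (e : G →L[ℂ] H) (he : Function.Injective ⇑e) (hd : DenseRange ⇑e)
    (MK : Set (K →L[ℂ] K)) (hMK : IsHilbertModule K MK)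
    (eE : E →L[ℂ] K) (heE : Function.Injective ⇑eE) (hdE : DenseRange ⇑eE)
    (D : G →L[ℂ] E) (a c : E →L[ℂ] AntiDual E)
    -- coercivity of `D*aD` and `D*cD`:
    (μ ν : ℝ) (hμ : 0 < μ) (hν : 0 < ν)
    (hcoa : ∀ u : G, μ * ‖u‖ ^ 2 - ν * ‖e u‖ ^ 2 ≤ (a (D u) (D u)).re)
    (hcoc : ∀ u : G, μ * ‖u‖ ^ 2 - ν * ‖e u‖ ^ 2 ≤ (c (D u) (D u)).re)
    (z : ℂ) (hz : z.re ≤ -ν)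
    -- `Wc = D (Δ_c − z)⁻¹ ∈ B(H,K)` and `Tc = D (D*cD − z)⁻¹ D* ∈ B(K)`:
    (Wc : H →L[ℂ] K)
    (hWc : ∀ v : H, ∃ u : G,
      ((precompAntiDual D).comp (c.comp D)) u - z • ((toAntiDual e).comp e) u
          = toAntiDual e v ∧ Wc v = eE (D u))
    (Tc : K →L[ℂ] K)
    (hTc : ∀ w : K, ∃ u : G,
      ((precompAntiDual D).comp (c.comp D)) u - z • ((toAntiDual e).comp e) u
          = precompAntiDual D (toAntiDual eE w) ∧ Tc w = eE (D u))
    -- `a − c` restricts to a bounded operator `m` on `K`: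
    (m : K →L[ℂ] K) (hm : ∀ u : E, (a - c) u = toAntiDual eE (m (eE u))) :
    -- right decay preserving version:
    ((RightDecayPreserving MH MK Wc → RightDecayPreserving MK MK Tc →
      RightDecayPreserving MK MK m →
      ∃ (Wa : H →L[ℂ] K) (Ta : K →L[ℂ] K),
        (∀ v : H, ∃ u : G,
          ((precompAntiDual D).comp (a.comp D)) u - z • ((toAntiDual e).comp e) u
              = toAntiDual e v ∧ Wa v = eE (D u)) ∧
        (∀ w : K, ∃ u : G,
          ((precompAntiDual D).comp (a.comp D)) u - z • ((toAntiDual e).comp e) u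
              = precompAntiDual D (toAntiDual eE w) ∧ Ta w = eE (D u)) ∧
        RightDecayPreserving MH MK Wa ∧ RightDecayPreserving MK MK Ta)) ∧
    -- left decay preserving version:
    ((LeftDecayPreserving MH MK Wc → LeftDecayPreserving MK MK Tc →
      LeftDecayPreserving MK MK m →
      ∃ (Wa : H →L[ℂ] K) (Ta : K →L[ℂ] K),
        (∀ v : H, ∃ u : G,
          ((precompAntiDual D).comp (a.comp D)) u - z • ((toAntiDual e).comp e) u
              = toAntiDual e v ∧ Wa v = eE (D u)) ∧
        (∀ w : K, ∃ u : G,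
          ((precompAntiDual D).comp (a.comp D)) u - z • ((toAntiDual e).comp e) u
              = precompAntiDual D (toAntiDual eE w) ∧ Ta w = eE (D u)) ∧
        LeftDecayPreserving MH MK Wa ∧ LeftDecayPreserving MK MK Ta)) :=
  stmt6_general MH e MK eE D a c μ ν hμ hcoa hcoc z hz Wc hWc Tc hTc m hm

end
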